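/- For any matrix $H \in \mathbb{R}^{d\times 2}$, $\|H\|_* \ge s_1(\sigma(H)) + s_2(\sigma(H))$ does NOT hold in general; however, the infimum over all $H$ with $\sigma(H)$ having prescribed singular values $\{s_1, s_2\}$ of the nuclear norm $\|H\|_*$ equals $s_1 + s_2$, and this infimum is attained by any nonnegative matrix $H \ge 0$ with singular values $\{s_1, s_2\}$ (for which $\sigma(H) = H$). -/

import Mathlib

open Matrix BigOperators

noncomputable def frobSq {m n : ℕ} (A : Matrix (Fin m) (Fin n) ℝ) : ℝ :=
  ∑ i, ∑ j, (A i j)^2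

noncomputable def singVals {m n : ℕ} (A : Matrix (Fin m) (Fin n) ℝ) : Fin n → ℝ :=
  fun i => Real.sqrt ((Matrix.posSemidef_conjTranspose_mul_self A).isHermitian.eigenvalues i)

noncomputable def nuclearNorm {m n : ℕ} (A : Matrix (Fin m) (Fin n) ℝ) : ℝ :=
  ∑ i, singVals A i

noncomputable def relu : ℝ → ℝ := fun t => max t 0

/-!
Since `‖A‖_* = ∑ σᵢ` and the `σᵢ²` are the eigenvalues of the Gram matrix `G = AᵀA`, the
nuclear norm is determined by the spectral invariants `tr G`, `tr G²`, `det G`. With two columns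
`x, y` this reads `‖A‖_*² = |x|² + |y|² + 2 √(|x|²|y|² - ⟪x, y⟫²)`. Splitting `x = x⁺ - x⁻`,
`y = y⁺ - y⁻` into positive and negative parts, and bounding the four cross products `⟪x^±, y^±⟫`
by Cauchy–Schwarz, this quantity can only decrease when `x, y` are replaced by `x⁺, y⁺`; so ReLU
does not increase the nuclear norm of a two-column matrix, which gives the lower bound, and a
nonnegative matrix with orthogonal columns of lengths `s₁, s₂` attains it. With three columns the
invariants determine `‖A‖_*` through a quartic equation, and `M = [[-1,0,2],[0,1,2],[2,2,0]]` has
`‖M‖_* = 6 < ‖σ(M)‖_*`.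
-/

lemma Matrix.IsHermitian.trace_mul_self_eq_sum_eigenvalues_sq {𝕜 n : Type*} [RCLike 𝕜]
    [Fintype n] [DecidableEq n] {A : Matrix n n 𝕜} (hA : A.IsHermitian) :
    (A * A).trace = ∑ i, ((hA.eigenvalues i ^ 2 : ℝ) : 𝕜) := by
  conv_lhs => rw [hA.spectral_theorem, ← map_mul, Unitary.conjStarAlgAut_apply, trace_mul_cycle,
    Unitary.coe_star_mul_self, one_mul, diagonal_mul_diagonal, trace_diagonal]
  simp [sq]

section SingularValues

variable {m n : ℕ} (A : Matrix (Fin m) (Fin n) ℝ)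

lemma singVals_nonneg (i : Fin n) : 0 ≤ singVals A i := Real.sqrt_nonneg _

lemma singVals_sq (i : Fin n) :
    singVals A i ^ 2 = (posSemidef_conjTranspose_mul_self A).isHermitian.eigenvalues i :=
  Real.sq_sqrt ((posSemidef_conjTranspose_mul_self A).eigenvalues_nonneg i)

lemma trace_gram_eq_sum_singVals_sq : (Aᵀ * A).trace = ∑ i, singVals A i ^ 2 := by
  simp only [singVals_sq, ← conjTranspose_eq_transpose_of_trivial,
    (posSemidef_conjTranspose_mul_self A).isHermitian.trace_eq_sum_eigenvalues,
    RCLike.ofReal_real_eq_id, id]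

lemma trace_gram_mul_gram_eq_sum_singVals_pow_four :
    ((Aᵀ * A) * (Aᵀ * A)).trace = ∑ i, singVals A i ^ 4 := by
  simp only [show 4 = 2 * 2 from rfl, pow_mul, singVals_sq,
    ← conjTranspose_eq_transpose_of_trivial,
    (posSemidef_conjTranspose_mul_self A).isHermitian.trace_mul_self_eq_sum_eigenvalues_sq,
    RCLike.ofReal_real_eq_id, id]

lemma det_gram_eq_prod_singVals_sq : (Aᵀ * A).det = ∏ i, singVals A i ^ 2 := by
  simp only [singVals_sq, ← conjTranspose_eq_transpose_of_trivial,
    (posSemidef_conjTranspose_mul_self A).isHermitian.det_eq_prod_eigenvalues,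
    RCLike.ofReal_real_eq_id, id]

lemma nuclearNorm_nonneg : 0 ≤ nuclearNorm A :=
  Finset.sum_nonneg fun i _ => singVals_nonneg A i

lemma trace_gram_le_nuclearNorm_sq : (Aᵀ * A).trace ≤ nuclearNorm A ^ 2 := by
  rw [trace_gram_eq_sum_singVals_sq]
  exact Finset.sum_sq_le_sq_sum_of_nonneg fun i _ => singVals_nonneg A i

end SingularValues

lemma nuclearNorm_fin_two {m : ℕ} (A : Matrix (Fin m) (Fin 2) ℝ) :
    nuclearNorm A = √((Aᵀ * A).trace + 2 * √((Aᵀ * A).det)) := by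
  have h0 := singVals_nonneg A 0
  have h1 := singVals_nonneg A 1
  rw [trace_gram_eq_sum_singVals_sq, det_gram_eq_prod_singVals_sq, Fin.sum_univ_two,
    Fin.prod_univ_two, ← mul_pow, Real.sqrt_sq (mul_nonneg h0 h1), nuclearNorm, Fin.sum_univ_two,
    ← Real.sqrt_sq (add_nonneg h0 h1)]
  ring_nf

lemma nuclearNorm_eq_add_of_trace_gram_of_det_gram {m : ℕ} {A : Matrix (Fin m) (Fin 2) ℝ}
    {s₁ s₂ : ℝ} (hs₁ : 0 ≤ s₁) (hs₂ : 0 ≤ s₂) (htr : (Aᵀ * A).trace = s₁ ^ 2 + s₂ ^ 2)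
    (hdet : (Aᵀ * A).det = s₁ ^ 2 * s₂ ^ 2) :
    nuclearNorm A = s₁ + s₂ := by
  rw [nuclearNorm_fin_two, htr, hdet, ← mul_pow, Real.sqrt_sq (mul_nonneg hs₁ hs₂),
    ← Real.sqrt_sq (add_nonneg hs₁ hs₂)]
  ring_nf

-- `(∑ σ)² - ∑ σ²` is twice the second elementary symmetric function of the `σ`; squaring it
-- once more leaves only `∑ σ⁴` and `∏ σ = √det` as new terms.
lemma nuclearNorm_fin_three_sq_sub_trace_sq {m : ℕ} (A : Matrix (Fin m) (Fin 3) ℝ) :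
    (nuclearNorm A ^ 2 - (Aᵀ * A).trace) ^ 2 =
      2 * ((Aᵀ * A).trace ^ 2 - ((Aᵀ * A) * (Aᵀ * A)).trace) +
        8 * √((Aᵀ * A).det) * nuclearNorm A := by
  have hprod : √((Aᵀ * A).det) = ∏ i, singVals A i := by
    rw [det_gram_eq_prod_singVals_sq, Finset.prod_pow,
      Real.sqrt_sq (Finset.prod_nonneg fun i _ => singVals_nonneg A i)]
  rw [hprod, trace_gram_eq_sum_singVals_sq, trace_gram_mul_gram_eq_sum_singVals_pow_four,
    nuclearNorm]
  simp only [Fin.sum_univ_three, Fin.prod_univ_three]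
  ring

lemma relu_nonneg (t : ℝ) : 0 ≤ relu t := le_max_right t 0

lemma relu_sub_relu_neg (t : ℝ) : relu t - relu (-t) = t := by
  rcases le_total t 0 with h | h <;> simp [relu, h]

lemma relu_mul_relu_neg (t : ℝ) : relu t * relu (-t) = 0 := by
  rcases le_total t 0 with h | h <;> simp [relu, h]

lemma map_relu_eq_self {m n : Type*} {A : Matrix m n ℝ} (hA : ∀ i j, 0 ≤ A i j) :
    A.map relu = A := by
  ext i j
  exact max_eq_left (hA i j)

-- Here `u, v` (resp. `u', v'`) are the norms of the positive and negative parts of `x` (resp. `y`)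
-- and `a, b, c, e` the cross products `⟪x⁺, y⁺⟫, ⟪x⁺, y⁻⟫, ⟪x⁻, y⁺⟫, ⟪x⁻, y⁻⟫`.
lemma sq_add_sq_add_two_sqrt_le {u v u' v' a b c e : ℝ} (hu : 0 ≤ u) (hv : 0 ≤ v)
    (hu' : 0 ≤ u') (hv' : 0 ≤ v') (ha : 0 ≤ a) (hb : 0 ≤ b) (hc : 0 ≤ c) (he : 0 ≤ e)
    (hau : a ≤ u * u') (hbu : b ≤ u * v') (hcu : c ≤ v * u') (heu : e ≤ v * v') :
    u ^ 2 + u' ^ 2 + 2 * √(u ^ 2 * u' ^ 2 - a ^ 2) ≤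
      (u ^ 2 + v ^ 2) + (u' ^ 2 + v' ^ 2) +
        2 * √((u ^ 2 + v ^ 2) * (u' ^ 2 + v' ^ 2) - (a + e - b - c) ^ 2) := by
  rcases le_total 0 (a + e - b - c) with hs | hs
  · have hae : a * e ≤ (u * u') * (v * v') := mul_le_mul hau heu he (by positivity)
    have hdet : u ^ 2 * u' ^ 2 - a ^ 2 ≤
        (u ^ 2 + v ^ 2) * (u' ^ 2 + v' ^ 2) - (a + e - b - c) ^ 2 := by
      nlinarith [sq_nonneg (u * v' - v * u'), mul_le_mul heu heu he (by positivity)]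
    nlinarith [Real.sqrt_le_sqrt hdet]
  · have hbc : b + c ≤ u * v' + v * u' := add_le_add hbu hcu
    have hdet : (u * u' - v * v') ^ 2 ≤
        (u ^ 2 + v ^ 2) * (u' ^ 2 + v' ^ 2) - (a + e - b - c) ^ 2 := by
      nlinarith
    have hD : u * u' - v * v' ≤
        √((u ^ 2 + v ^ 2) * (u' ^ 2 + v' ^ 2) - (a + e - b - c) ^ 2) :=
      (le_abs_self _).trans (Real.abs_le_sqrt hdet)
    have hA : √(u ^ 2 * u' ^ 2 - a ^ 2) ≤ u * u' := by
      rw [Real.sqrt_le_left (by positivity)]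
      nlinarith
    nlinarith [sq_nonneg (v - v')]

section TwoColumns

variable {ι : Type*} [Fintype ι]

noncomputable def nuclearNormSqOfCols (x y : ι → ℝ) : ℝ :=
  x ⬝ᵥ x + y ⬝ᵥ y + 2 * √(x ⬝ᵥ x * (y ⬝ᵥ y) - (x ⬝ᵥ y) ^ 2)

lemma dotProduct_le_sqrt_mul_sqrt (v w : ι → ℝ) : v ⬝ᵥ w ≤ √(v ⬝ᵥ v) * √(w ⬝ᵥ w) := by
  simpa [dotProduct, sq] using Real.sum_mul_le_sqrt_mul_sqrt Finset.univ v w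

lemma relu_comp_dotProduct_relu_comp_neg (x : ι → ℝ) : (relu ∘ x) ⬝ᵥ (relu ∘ (-x)) = 0 :=
  Finset.sum_eq_zero fun i _ => relu_mul_relu_neg (x i)

lemma nuclearNormSqOfCols_relu_comp_le (x y : ι → ℝ) :
    nuclearNormSqOfCols (relu ∘ x) (relu ∘ y) ≤ nuclearNormSqOfCols x y := by
  have hsplit (z : ι → ℝ) : z = relu ∘ z - relu ∘ (-z) :=
    funext fun i => (relu_sub_relu_neg (z i)).symm
  have hpos (z : ι → ℝ) : 0 ≤ relu ∘ z := fun i => relu_nonneg (z i)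
  have hsq (z : ι → ℝ) :
      z ⬝ᵥ z = (relu ∘ z) ⬝ᵥ (relu ∘ z) + (relu ∘ (-z)) ⬝ᵥ (relu ∘ (-z)) := by
    conv_lhs => rw [hsplit z]
    simp only [sub_dotProduct, dotProduct_sub, relu_comp_dotProduct_relu_comp_neg,
      dotProduct_comm (relu ∘ (-z)) (relu ∘ z)]
    ring
  have hxy : x ⬝ᵥ y = (relu ∘ x) ⬝ᵥ (relu ∘ y) + (relu ∘ (-x)) ⬝ᵥ (relu ∘ (-y)) -
      (relu ∘ x) ⬝ᵥ (relu ∘ (-y)) - (relu ∘ (-x)) ⬝ᵥ (relu ∘ y) := by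
    conv_lhs => rw [hsplit x, hsplit y]
    simp only [sub_dotProduct, dotProduct_sub]
    ring
  have key := sq_add_sq_add_two_sqrt_le (Real.sqrt_nonneg _) (Real.sqrt_nonneg _)
    (Real.sqrt_nonneg _) (Real.sqrt_nonneg _)
    (dotProduct_nonneg_of_nonneg (hpos x) (hpos y))
    (dotProduct_nonneg_of_nonneg (hpos x) (hpos (-y)))
    (dotProduct_nonneg_of_nonneg (hpos (-x)) (hpos y))
    (dotProduct_nonneg_of_nonneg (hpos (-x)) (hpos (-y)))
    (dotProduct_le_sqrt_mul_sqrt _ _) (dotProduct_le_sqrt_mul_sqrt _ _)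
    (dotProduct_le_sqrt_mul_sqrt _ _) (dotProduct_le_sqrt_mul_sqrt _ _)
  rw [nuclearNormSqOfCols, nuclearNormSqOfCols, hsq x, hsq y, hxy]
  simpa only [Real.sq_sqrt (dotProduct_nonneg_of_nonneg (hpos _) (hpos _))] using key

lemma trace_gram_fin_two (A : Matrix ι (Fin 2) ℝ) :
    (Aᵀ * A).trace = Aᵀ 0 ⬝ᵥ Aᵀ 0 + Aᵀ 1 ⬝ᵥ Aᵀ 1 := by
  rw [trace_fin_two, mul_apply', mul_apply']
  rfl

lemma det_gram_fin_two (A : Matrix ι (Fin 2) ℝ) :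
    (Aᵀ * A).det = Aᵀ 0 ⬝ᵥ Aᵀ 0 * (Aᵀ 1 ⬝ᵥ Aᵀ 1) - (Aᵀ 0 ⬝ᵥ Aᵀ 1) ^ 2 := by
  rw [det_fin_two, sq, show (Aᵀ * A) 1 0 = (Aᵀ * A) 0 1 from dotProduct_comm _ _]
  rfl

end TwoColumns

lemma nuclearNorm_eq_sqrt_nuclearNormSqOfCols {m : ℕ} (A : Matrix (Fin m) (Fin 2) ℝ) :
    nuclearNorm A = √(nuclearNormSqOfCols (Aᵀ 0) (Aᵀ 1)) := by
  rw [nuclearNorm_fin_two, trace_gram_fin_two, det_gram_fin_two, nuclearNormSqOfCols]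

lemma nuclearNorm_map_relu_le_of_fin_two {m : ℕ} (H : Matrix (Fin m) (Fin 2) ℝ) :
    nuclearNorm (H.map relu) ≤ nuclearNorm H := by
  rw [nuclearNorm_eq_sqrt_nuclearNormSqOfCols, nuclearNorm_eq_sqrt_nuclearNormSqOfCols]
  exact Real.sqrt_le_sqrt (nuclearNormSqOfCols_relu_comp_le (Hᵀ 0) (Hᵀ 1))

lemma transpose_mul_self_of_injective {R m n : Type*} [CommSemiring R] [Fintype m]
    [DecidableEq m] [DecidableEq n] {f : n → m} (hf : Function.Injective f) (v : n → R) :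
    (of fun i j => if i = f j then v j else 0)ᵀ * of (fun i j => if i = f j then v j else 0) =
      diagonal fun j => v j ^ 2 := by
  ext j k
  by_cases hjk : j = k
  · subst hjk
    simp [mul_apply, sq]
  · simp [mul_apply, hjk, (hf.ne hjk).symm]

lemma exists_nonneg_trace_gram_det_gram {d : ℕ} (hd : 2 ≤ d) {s₁ s₂ : ℝ} (hs₁ : 0 ≤ s₁)
    (hs₂ : 0 ≤ s₂) :
    ∃ H : Matrix (Fin d) (Fin 2) ℝ, (∀ i j, 0 ≤ H i j) ∧
      (Hᵀ * H).trace = s₁ ^ 2 + s₂ ^ 2 ∧ (Hᵀ * H).det = s₁ ^ 2 * s₂ ^ 2 := by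
  have hv : ∀ j, 0 ≤ ![s₁, s₂] j := fun j => by fin_cases j <;> assumption
  refine ⟨of fun i j => if i = Fin.castLE hd j then ![s₁, s₂] j else 0,
    fun i j => by dsimp only [of_apply]; split_ifs <;> simp [hv], ?_⟩
  rw [transpose_mul_self_of_injective (Fin.castLE_injective hd), trace_diagonal, det_diagonal,
    Fin.sum_univ_two, Fin.prod_univ_two]
  simp

lemma nuclearNorm_le_six :
    nuclearNorm !![(-1 : ℝ), 0, 2; 0, 1, 2; 2, 2, 0] ≤ 6 := by
  set M : Matrix (Fin 3) (Fin 3) ℝ := !![-1, 0, 2; 0, 1, 2; 2, 2, 0]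
  have hG : Mᵀ * M = !![5, 4, -2; 4, 5, 2; -2, 2, 8] := by
    rw [eta_fin_three Mᵀ]
    simp [M]
    norm_num
  have hquartic := nuclearNorm_fin_three_sq_sub_trace_sq M
  have htr := trace_gram_le_nuclearNorm_sq M
  simp only [hG, trace_fin_three, det_fin_three, mul_fin_three, of_apply, cons_val',
    cons_val_zero, cons_val_one, cons_val_two, empty_val', cons_val_fin_one] at hquartic htr
  norm_num at hquartic htr
  have hsq : nuclearNorm M ^ 2 ≤ 36 := by nlinarith
  nlinarith [nuclearNorm_nonneg M]

lemma six_lt_nuclearNorm :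
    6 < nuclearNorm !![(0 : ℝ), 0, 2; 0, 1, 2; 2, 2, 0] := by
  set S : Matrix (Fin 3) (Fin 3) ℝ := !![0, 0, 2; 0, 1, 2; 2, 2, 0]
  have hG : Sᵀ * S = !![4, 4, 0; 4, 5, 2; 0, 2, 8] := by
    rw [eta_fin_three Sᵀ]
    simp [S]
    norm_num
  have hquartic := nuclearNorm_fin_three_sq_sub_trace_sq S
  have htr := trace_gram_le_nuclearNorm_sq S
  simp only [hG, trace_fin_three, det_fin_three, mul_fin_three, of_apply, cons_val',
    cons_val_zero, cons_val_one, cons_val_two, empty_val', cons_val_fin_one] at hquartic htr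
  norm_num at hquartic htr
  by_contra! hle
  have h4 : 4 ≤ nuclearNorm S := by nlinarith [nuclearNorm_nonneg S]
  have h19 : nuclearNorm S ^ 2 - 17 ≤ 19 := by nlinarith
  nlinarith [pow_le_pow_left₀ (sub_nonneg.mpr htr) h19 2]

lemma exists_nuclearNorm_lt_nuclearNorm_map_relu :
    ∃ M : Matrix (Fin 3) (Fin 3) ℝ, nuclearNorm M < nuclearNorm (M.map relu) := by
  refine ⟨!![-1, 0, 2; 0, 1, 2; 2, 2, 0], ?_⟩
  have hmap : (!![-1, 0, 2; 0, 1, 2; 2, 2, 0] : Matrix (Fin 3) (Fin 3) ℝ).map relu =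
      !![0, 0, 2; 0, 1, 2; 2, 2, 0] := by
    ext i j
    fin_cases i <;> fin_cases j <;> norm_num [relu]
  rw [hmap]
  exact nuclearNorm_le_six.trans_lt six_lt_nuclearNorm

theorem stmt_10 :
    (¬ ∀ (n : ℕ) (M : Matrix (Fin n) (Fin n) ℝ),
        nuclearNorm (M.map relu) ≤ nuclearNorm M) ∧
    (∀ (d : ℕ), 2 ≤ d → ∀ s1 s2 : ℝ, s2 ≤ s1 → 0 ≤ s2 →
      IsGLB {v : ℝ | ∃ H : Matrix (Fin d) (Fin 2) ℝ,
          Matrix.trace ((H.map relu)ᵀ * (H.map relu)) = s1 ^ 2 + s2 ^ 2 ∧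
          Matrix.det ((H.map relu)ᵀ * (H.map relu)) = s1 ^ 2 * s2 ^ 2 ∧
          v = nuclearNorm H}
        (s1 + s2) ∧
      (∀ H : Matrix (Fin d) (Fin 2) ℝ, (∀ i j, 0 ≤ H i j) →
        Matrix.trace (Hᵀ * H) = s1 ^ 2 + s2 ^ 2 →
        Matrix.det (Hᵀ * H) = s1 ^ 2 * s2 ^ 2 →
        nuclearNorm H = s1 + s2)) := by
  refine ⟨fun h => ?_, fun d hd s1 s2 h21 hs2 => ?_⟩
  · obtain ⟨M, hM⟩ := exists_nuclearNorm_lt_nuclearNorm_map_relu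
    exact (h 3 M).not_gt hM
  have hs1 : 0 ≤ s1 := hs2.trans h21
  refine ⟨⟨?_, fun b hb => ?_⟩, fun H _ => nuclearNorm_eq_add_of_trace_gram_of_det_gram hs1 hs2⟩
  · rintro _ ⟨H, htr, hdet, rfl⟩
    exact (nuclearNorm_eq_add_of_trace_gram_of_det_gram hs1 hs2 htr hdet).symm.trans_le
      (nuclearNorm_map_relu_le_of_fin_two H)
  · obtain ⟨H, hH, htr, hdet⟩ := exists_nonneg_trace_gram_det_gram hd hs1 hs2
    refine hb ⟨H, ?_, ?_, (nuclearNorm_eq_add_of_trace_gram_of_det_gram hs1 hs2 htr hdet).symm⟩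
    all_goals rwa [map_relu_eq_self hH]
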